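/- The normalizing constants b_m satisfy exp(b_m^{3/2}) / [ (m²/(12π)) / log(m²/(12π)) ]^{3/4} → 1 as m → ∞. -/

import Mathlib

/-!
Since `b m → ∞` and `1 - F (b m) = 1/m`, squaring the tail asymptotic at `x = b m` gives
`s e^s ~ A` with `s = (4/3) b_m^{3/2}` and `A = m²/(12π)`. Taking logarithms, `log A ~ s`, so
`e^s ~ A / log A`; raising this to the power `3/4` is the claim.
-/

open Real Filter Topology

lemma StrictMono.tendsto_atTop_of_tendsto_comp {α β γ : Type*} [LinearOrder α] [NoMaxOrder α]
    [LinearOrder β] [TopologicalSpace β] [OrderTopology β] {F : α → β} {c : β}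
    (hF : StrictMono F) (hFc : Tendsto F atTop (𝓝 c)) {l : Filter γ} {b : γ → α}
    (hb : Tendsto (F ∘ b) l (𝓝 c)) : Tendsto b l atTop := by
  refine Filter.tendsto_atTop.2 fun x => ?_
  obtain ⟨y, hxy⟩ := exists_gt x
  have hFx : F x < c := (hF hxy).trans_le (hF.monotone.ge_of_tendsto hFc y)
  exact (hb.eventually (lt_mem_nhds hFx)).mono fun m h => (hF.lt_iff_lt.1 h).le

lemma sq_tail_mul_inv (x m : ℝ) (hx : 0 ≤ x) :
    (4 * √π * x ^ ((3:ℝ)/4) * exp ((2/3) * x ^ ((3:ℝ)/2)) * (1 / m)) ^ 2 =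
      (4/3) * x ^ ((3:ℝ)/2) * exp ((4/3) * x ^ ((3:ℝ)/2)) / (m ^ 2 / (12 * π)) := by
  have hpow : (x ^ ((3:ℝ)/4)) ^ 2 = x ^ ((3:ℝ)/2) := by
    rw [← rpow_natCast, ← rpow_mul hx]; norm_num
  have hexp : exp ((2/3) * x ^ ((3:ℝ)/2)) ^ 2 = exp ((4/3) * x ^ ((3:ℝ)/2)) := by
    rw [← exp_nat_mul]; ring_nf
  have hsqrt : √π ^ 2 = π := sq_sqrt pi_pos.le
  calc _ = 16 * √π ^ 2 * (x ^ ((3:ℝ)/4)) ^ 2 * exp ((2/3) * x ^ ((3:ℝ)/2)) ^ 2 / m ^ 2 := by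
        ring
    _ = _ := by
        rw [hpow, hexp, hsqrt]
        field_simp
        ring

lemma tendsto_exp_div_div_log_of_tendsto_mul_exp_div {α : Type*} {l : Filter α} {s A : α → ℝ}
    (hs : Tendsto s l atTop) (hsA : Tendsto (fun n => s n * exp (s n) / A n) l (𝓝 1)) :
    Tendsto (fun n => exp (s n) / (A n / log (A n))) l (𝓝 1) := by
  have hs_pos : ∀ᶠ n in l, 0 < s n := hs.eventually (eventually_gt_atTop 0)
  have hA_pos : ∀ᶠ n in l, 0 < A n := by
    filter_upwards [hs_pos, hsA.eventually (eventually_gt_nhds one_pos)] with n hsn hr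
    by_contra! hA
    exact (div_nonpos_of_nonneg_of_nonpos (by positivity) hA).not_gt hr
  have hlog : Tendsto (fun n => log (s n) + s n - log (A n)) l (𝓝 0) := by
    have := ((continuousAt_log one_ne_zero).tendsto.comp hsA)
    rw [log_one] at this
    refine this.congr' ?_
    filter_upwards [hs_pos, hA_pos] with n hsn hAn
    simp only [Function.comp_apply]
    rw [log_div (by positivity) hAn.ne', log_mul hsn.ne' (exp_ne_zero _), log_exp]
  -- `log A / s = 1 + log s / s - (log s + s - log A) / s`
  have hlogA : Tendsto (fun n => log (A n) / s n) l (𝓝 1) := by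
    have hlogs := isLittleO_log_id_atTop.tendsto_div_nhds_zero.comp hs
    have := (tendsto_const_nhds (x := (1:ℝ))).add hlogs |>.sub (hlog.mul hs.inv_tendsto_atTop)
    simp only [add_zero, zero_mul, sub_zero] at this
    refine this.congr' ?_
    filter_upwards [hs_pos] with n hsn
    simp only [Function.comp_apply, id, Pi.inv_apply]
    field_simp
    ring
  simpa using (hsA.mul hlogA).congr' <| by
    filter_upwards [hs_pos] with n hsn
    field_simp

lemma Filter.Tendsto.rpow_div_rpow_of_div {α : Type*} {l : Filter α} {u v : α → ℝ}
    (huv : Tendsto (fun n => u n / v n) l (𝓝 1)) (hu : ∀ n, 0 < u n) (p : ℝ) :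
    Tendsto (fun n => u n ^ p / v n ^ p) l (𝓝 1) := by
  have := (continuousAt_rpow_const 1 p (Or.inl one_ne_zero)).tendsto.comp huv
  rw [one_rpow] at this
  refine this.congr' ?_
  filter_upwards [huv.eventually (eventually_gt_nhds one_pos)] with n hn
  have hv : 0 < v n := by
    by_contra! hv
    exact (div_nonpos_of_nonneg_of_nonpos (hu n).le hv).not_gt hn
  exact div_rpow (hu n).le hv.le p

theorem exp_bm_asymptotic_general
    (F : ℝ → ℝ) (b : ℕ → ℝ)
    (hFmono : StrictMono F)
    (hF1 : Tendsto F atTop (nhds 1))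
    (htail : Tendsto (fun x : ℝ =>
        4 * Real.sqrt π * x ^ ((3:ℝ)/4) * Real.exp ((2/3) * x ^ ((3:ℝ)/2)) * (1 - F x))
      atTop (nhds 1))
    (hb : ∀ m : ℕ, 2 ≤ m → F (b m) = 1 - 1 / m) :
    Tendsto (fun m : ℕ =>
        Real.exp (b m ^ ((3:ℝ)/2)) /
          (((m : ℝ) ^ 2 / (12 * π)) / Real.log ((m : ℝ) ^ 2 / (12 * π))) ^ ((3:ℝ)/4))
      atTop (nhds 1) := by
  have hFb : ∀ᶠ m : ℕ in atTop, F (b m) = 1 - 1 / m :=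
    eventually_atTop.2 ⟨2, hb⟩
  have hb_top : Tendsto b atTop atTop := by
    refine hFmono.tendsto_atTop_of_tendsto_comp hF1 (Tendsto.congr' (EventuallyEq.symm hFb) ?_)
    simpa using tendsto_const_nhds.sub (tendsto_one_div_atTop_nhds_zero_nat (𝕜 := ℝ))
  have hs_top : Tendsto (fun m => (4/3 : ℝ) * b m ^ ((3:ℝ)/2)) atTop atTop :=
    ((tendsto_rpow_atTop (by norm_num)).comp hb_top).const_mul_atTop (by norm_num)
  have hsA : Tendsto (fun m : ℕ => (4/3 : ℝ) * b m ^ ((3:ℝ)/2) * exp ((4/3) * b m ^ ((3:ℝ)/2)) /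
      ((m : ℝ) ^ 2 / (12 * π))) atTop (𝓝 1) := by
    have := (htail.comp hb_top).pow 2
    rw [one_pow] at this
    refine this.congr' ?_
    filter_upwards [hFb, hb_top.eventually (eventually_ge_atTop 0)] with m hFm hbm
    simp only [Function.comp_apply, hFm, sub_sub_cancel]
    exact sq_tail_mul_inv (b m) m hbm
  refine ((tendsto_exp_div_div_log_of_tendsto_mul_exp_div hs_top hsA).rpow_div_rpow_of_div
    (fun _ => exp_pos _) ((3:ℝ)/4)).congr fun m => ?_
  rw [← exp_mul]
  ring_nf

/-- The Gumbel normalizing constants `b m` for the Tracy–Widom law satisfy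
`exp (b m ^ (3/2)) / ((m^2/(12π)) / log (m^2/(12π)))^(3/4) → 1` as `m → ∞`. -/
theorem exp_bm_asymptotic
    (F : ℝ → ℝ) (b : ℕ → ℝ)
    (hFcont : Continuous F)
    (hFmono : StrictMono F)
    (hF0 : Tendsto F atBot (nhds 0))
    (hF1 : Tendsto F atTop (nhds 1))
    (htail : Tendsto (fun x : ℝ =>
        4 * Real.sqrt π * x ^ ((3:ℝ)/4) * Real.exp ((2/3) * x ^ ((3:ℝ)/2)) * (1 - F x))
      atTop (nhds 1))
    (hb : ∀ m : ℕ, 2 ≤ m → F (b m) = 1 - 1 / m) :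
    Tendsto (fun m : ℕ =>
        Real.exp (b m ^ ((3:ℝ)/2)) /
          (((m : ℝ) ^ 2 / (12 * π)) / Real.log ((m : ℝ) ^ 2 / (12 * π))) ^ ((3:ℝ)/4))
      atTop (nhds 1) :=
  exp_bm_asymptotic_general F b hFmono hF1 htail hb
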